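/- Let D be a DAG on a finite vertex set V containing the edge v → w, and let D' be the directed graph identical to D except that v → w is replaced by w → v. Then D' is a DAG that is unconditionally equivalent to D if and only if the edge v → w is weakly covered in D. -/

import Mathlib

namespace UEC

variable {V : Type*}

/-- A directed graph is a DAG if it has no directed cycles. -/
def IsDAG (D : Digraph V) : Prop := ∀ v : V, ¬ Relation.TransGen D.Adj v v

/-- `an D v` : the set of ancestors of `v` (nodes with a directed path to `v`),
including `v` itself. -/
def an (D : Digraph V) (v : V) : Set V := {u | Relation.ReflTransGen D.Adj u v}

/-- `de D v` : the set of descendants of `v` (nodes reachable by a directed path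
from `v`), including `v` itself. -/
def de (D : Digraph V) (v : V) : Set V := {u | Relation.ReflTransGen D.Adj v u}

/-- `pa D v` : the set of parents of `v`. -/
def pa (D : Digraph V) (v : V) : Set V := {u | D.Adj u v}

/-- A source node is a node with no parents. -/
def IsSource (D : Digraph V) (v : V) : Prop := pa D v = ∅

/-- `sources D` : the set of source nodes of `D` (denoted `ma_D(V)` in the paper). -/
def sources (D : Digraph V) : Set V := {v | IsSource D v}

/-- Ancestors of a set of nodes. -/
def anSet (D : Digraph V) (A : Set V) : Set V := ⋃ a ∈ A, an D a

/-- `maSet D A = {u ∈ an_D(A) : an_D(u) = {u}}`, the source nodes that are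
ancestors of `A`. -/
def maSet (D : Digraph V) (A : Set V) : Set V :=
  {u | u ∈ anSet D A ∧ an D u = {u}}

/-- Two nodes are adjacent in a digraph if there is an edge between them in
either direction. -/
def Adjacent (D : Digraph V) (v w : V) : Prop := D.Adj v w ∨ D.Adj w v

/-- A trek in `D` is a path over distinct vertices (given as the list of its
vertices, consecutive ones being adjacent) containing no collider
`p i → p (i+1) ← p (i+2)` as a subpath. -/
def IsTrekList (D : Digraph V) (p : List V) : Prop :=
  p.Nodup ∧
    (∀ i : ℕ, (h : i + 1 < p.length) →
      (D.Adj (p.get ⟨i, by omega⟩) (p.get ⟨i + 1, h⟩) ∨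
        D.Adj (p.get ⟨i + 1, h⟩) (p.get ⟨i, by omega⟩))) ∧
    (∀ i : ℕ, (h : i + 2 < p.length) →
      ¬(D.Adj (p.get ⟨i, by omega⟩) (p.get ⟨i + 1, by omega⟩) ∧
        D.Adj (p.get ⟨i + 2, h⟩) (p.get ⟨i + 1, by omega⟩)))

/-- There is a trek between `v` and `w` in `D`. -/
def HasTrek (D : Digraph V) (v w : V) : Prop :=
  ∃ p : List V, IsTrekList D p ∧ p.head? = some v ∧ p.getLast? = some w

/-- Adjacency in the unconditional dependence graph `U^D` : two distinct nodes
are adjacent iff there is a trek between them. -/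
def UAdj (D : Digraph V) (v w : V) : Prop :=
  v ≠ w ∧ (HasTrek D v w ∨ HasTrek D w v)

/-- Two digraphs on the same vertex set are unconditionally equivalent if for
all distinct nodes there is a trek between them in one iff there is one in the
other. -/
def UncondEquiv (D D' : Digraph V) : Prop :=
  ∀ v w : V, v ≠ w → (HasTrek D v w ↔ HasTrek D' v w)

/-- The digraph obtained by adding the edge `v → w`. -/
def addEdge (D : Digraph V) (v w : V) : Digraph V :=
  ⟨fun a b => D.Adj a b ∨ (a = v ∧ b = w)⟩

/-- The digraph obtained by deleting the edge `v → w`. -/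
def delEdge (D : Digraph V) (v w : V) : Digraph V :=
  ⟨fun a b => D.Adj a b ∧ ¬(a = v ∧ b = w)⟩

/-- The digraph obtained by replacing the edge `v → w` with `w → v`. -/
def revEdge (D : Digraph V) (v w : V) : Digraph V :=
  ⟨fun a b => (D.Adj a b ∧ ¬(a = v ∧ b = w)) ∨ (a = w ∧ b = v)⟩

/-- The ordered pair `(v, w)` is partially weakly covered in `D`. -/
def PartiallyWeaklyCovered (D : Digraph V) (v w : V) : Prop :=
  maSet D {v} ⊆ maSet D {w} ∧ v ∉ an D w ∧ w ∉ an D v ∧ pa D v ≠ ∅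

/-- The ordered pair `(v, w)` is implied by transitivity in `D`, i.e.
`v ∈ an_D(w) \ ({w} ∪ pa_D(w))`. -/
def ImpliedByTransitivity (D : Digraph V) (v w : V) : Prop :=
  v ∈ an D w \ ({w} ∪ pa D w)

/-- The edge `v → w` is weakly covered in `D`. -/
def WeaklyCovered (D : Digraph V) (v w : V) : Prop :=
  maSet D (pa D v) = maSet D (pa D w \ {v}) ∧ v ∉ anSet D (pa D w \ {v})

/-!
Let `E` be `D` with the edge `v → w` deleted, so that `D = E + (v → w)` and the reversed graph is
`E + (w → v)`. In a DAG a trek joins `x` and `y` iff they have a common ancestor. The edge is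
weakly covered iff `v` is not an ancestor of `w` in `E` (which is exactly acyclicity of
`E + (w → v)`) and `v` and `w` have the same source proper ancestors in `E`, a condition symmetric
in `v` and `w`.

Given that symmetric condition, a common ancestor `u` of `x, y` in `E + (v → w)` whose path to `y`
uses the new edge can be replaced: a source `s` above `u` lies above `v`, hence above `w` as well,
unless `s = v`, in which case `w → v` makes `w` a common ancestor in `E + (w → v)`. Conversely,
a source `s` properly above `v` has a trek to `w` in `E + (v → w)`; in `E + (w → v)`, where `s` is
still a source, such a trek is a directed path to `w`, which cannot use the new edge `w → v`.
-/

open Relation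

section Acyclic

variable {D : Digraph V}

theorem IsDAG.exists_minimal [Finite V] (hD : IsDAG D) {S : Set V} (hS : S.Nonempty) :
    ∃ u ∈ S, ∀ z ∈ S, ¬TransGen D.Adj z u :=
  have : Std.Irrefl (TransGen D.Adj) := ⟨hD⟩
  (Finite.wellFounded_of_trans_of_irrefl (TransGen D.Adj)).has_min S hS

theorem IsDAG.exists_maximal [Finite V] (hD : IsDAG D) {S : Set V} (hS : S.Nonempty) :
    ∃ u ∈ S, ∀ z ∈ S, ¬TransGen D.Adj u z :=
  have : Std.Irrefl (Function.swap (TransGen D.Adj)) := ⟨hD⟩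
  (Finite.wellFounded_of_trans_of_irrefl (Function.swap (TransGen D.Adj))).has_min S hS

theorem IsDAG.nodup_of_isChain (hD : IsDAG D) {l : List V} (hl : l.IsChain D.Adj) :
    l.Nodup := by
  refine (List.isChain_iff_pairwise.1 (hl.imp fun _ _ => TransGen.single)).imp ?_
  rintro a _ h rfl
  exact hD a h

end Acyclic

section Trek

variable {D : Digraph V}

theorem isTrekList_singleton (a : V) : IsTrekList D [a] :=
  ⟨List.nodup_singleton a, fun _ h => by simp at h, fun _ h => by simp at h⟩

theorem isTrekList_cons_cons {a b : V} {l : List V} :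
    IsTrekList D (a :: b :: l) ↔ IsTrekList D (b :: l) ∧ a ∉ b :: l ∧ Adjacent D a b ∧
      ∀ c ∈ l.head?, ¬(D.Adj a b ∧ D.Adj c b) := by
  simp only [IsTrekList, List.nodup_cons (a := a), List.get_eq_getElem, List.length_cons, Adjacent]
  constructor
  · rintro ⟨⟨hab, hnd⟩, hadj, hcol⟩
    refine ⟨⟨hnd, fun i _ => hadj (i + 1) (by omega), fun i _ => hcol (i + 1) (by omega)⟩,
      hab, hadj 0 (by omega), fun c hc => ?_⟩
    obtain ⟨l', rfl⟩ : ∃ l', l = c :: l' := by cases l <;> simp_all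
    exact hcol 0 (by simp)
  · rintro ⟨⟨hnd, hadj, hcol⟩, hab, hadj0, hcol0⟩
    refine ⟨⟨hab, hnd⟩, fun i h => ?_, fun i h => ?_⟩
    · cases i with
      | zero => exact hadj0
      | succ i => exact hadj i (by omega)
    · cases i with
      | zero => cases l with
        | nil => simp at h
        | cons c l => exact hcol0 c rfl
      | succ i => exact hcol i (by omega)

theorem IsTrekList.reflTransGen_getLast {x : V} {l : List V} (h : IsTrekList D (x :: l))
    (hx : ∀ c ∈ l.head?, ¬D.Adj c x) : ReflTransGen D.Adj x ((x :: l).getLast (by simp)) := by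
  induction l generalizing x with
  | nil => exact .refl
  | cons b l ih =>
    obtain ⟨hb, -, hxb, hcol⟩ := isTrekList_cons_cons.1 h
    have hxb : D.Adj x b := hxb.resolve_right (hx b rfl)
    exact .head hxb (ih hb fun c hc hcb => hcol c hc ⟨hxb, hcb⟩)

theorem IsTrekList.exists_reflTransGen {x : V} {l : List V} (h : IsTrekList D (x :: l)) :
    ∃ u, ReflTransGen D.Adj u x ∧ ReflTransGen D.Adj u ((x :: l).getLast (by simp)) := by
  induction l generalizing x with
  | nil => exact ⟨x, .refl, .refl⟩
  | cons b l ih =>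
    obtain ⟨hb, -, hxb, hcol⟩ := isTrekList_cons_cons.1 h
    by_cases hfwd : D.Adj x b
    · refine ⟨x, .refl, .head hfwd (hb.reflTransGen_getLast fun c hc hcb => ?_)⟩
      exact hcol c hc ⟨hfwd, hcb⟩
    · obtain ⟨u, hub, huy⟩ := ih hb
      exact ⟨u, hub.tail (hxb.resolve_left hfwd), huy⟩

theorem isTrekList_of_isChain (hD : IsDAG D) {l : List V} (hl : l.IsChain D.Adj) :
    IsTrekList D l := by
  induction l with
  | nil => exact ⟨List.nodup_nil, fun _ h => by simp at h, fun _ h => by simp at h⟩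
  | cons a l ih =>
    cases l with
    | nil => exact isTrekList_singleton a
    | cons b l =>
      obtain ⟨hab, hbl⟩ := List.isChain_cons_cons.1 hl
      refine isTrekList_cons_cons.2 ⟨ih hbl, (List.nodup_cons.1 (hD.nodup_of_isChain hl)).1,
        .inl hab, fun c hc ⟨_, hcb⟩ => hD b (.tail (.single ?_) hcb)⟩
      cases l with
      | nil => simp at hc
      | cons c' l => exact (Option.some_inj.1 hc) ▸ (List.isChain_cons_cons.1 hbl).1

theorem isTrekList_append_of_isChain (hD : IsDAG D) {x : V} {xs ys : List V}
    (hxs : (x :: xs).IsChain (Function.swap D.Adj))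
    (hys : ((x :: xs).getLast (by simp) :: ys).IsChain D.Adj) (hnd : (x :: xs ++ ys).Nodup) :
    IsTrekList D (x :: xs ++ ys) := by
  induction xs generalizing x with
  | nil => exact isTrekList_of_isChain hD hys
  | cons b xs ih =>
    obtain ⟨hbx, hbxs⟩ := List.isChain_cons_cons.1 hxs
    refine isTrekList_cons_cons.2 ⟨ih hbxs hys (List.nodup_cons.1 hnd).2,
      (List.nodup_cons.1 hnd).1, .inr hbx, fun _ _ ⟨hxb, _⟩ => hD x (.tail (.single hxb) hbx)⟩

theorem HasTrek.exists_common_ancestor {x y : V} (h : HasTrek D x y) :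
    ∃ u, ReflTransGen D.Adj u x ∧ ReflTransGen D.Adj u y := by
  obtain ⟨_ | ⟨x', l⟩, hp, hx, hy⟩ := h
  · simp at hx
  · obtain rfl : x' = x := Option.some_inj.1 hx
    rw [List.getLast?_eq_some_getLast (List.cons_ne_nil x' l), Option.some_inj] at hy
    exact hy ▸ hp.exists_reflTransGen

theorem hasTrek_of_exists_common_ancestor [Finite V] (hD : IsDAG D) {x y : V}
    (hxy : ∃ u, ReflTransGen D.Adj u x ∧ ReflTransGen D.Adj u y) : HasTrek D x y := by
  -- a lowest common ancestor: the two directed paths from it meet only there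
  obtain ⟨u, ⟨hux, huy⟩, hmax⟩ := hD.exists_maximal hxy
  obtain ⟨xs, hxs, hxu⟩ := List.exists_isChain_cons_of_relationReflTransGen
    (reflTransGen_swap.2 hux)
  obtain ⟨ys, hys, hyy⟩ := List.exists_isChain_cons_of_relationReflTransGen huy
  have hdisj : ∀ z ∈ x :: xs, z ∉ ys := by
    intro z hzx hzy
    have hzx' : ReflTransGen D.Adj z x := reflTransGen_swap.1 <|
      hxs.induction (ReflTransGen (Function.swap D.Adj) x) _ (fun _ _ h h' => h'.tail h)
        (fun _ => .refl) z hzx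
    have hzy' : ReflTransGen D.Adj z y := hys.backwards_cons_induction
      (ReflTransGen D.Adj · y) _ hyy (fun _ _ => .head) .refl z (List.mem_cons_of_mem u hzy)
    have huz : TransGen D.Adj u z := by
      refine (reflTransGen_iff_eq_or_transGen.1 (hys.cons_induction (ReflTransGen D.Adj u) _
        (fun _ _ h h' => h'.tail h) .refl z hzy)).resolve_left ?_
      rintro rfl
      exact (List.nodup_cons.1 (hD.nodup_of_isChain hys)).1 hzy
    exact hmax z ⟨hzx', hzy'⟩ huz
  have hnd : (x :: xs ++ ys).Nodup := by
    refine List.nodup_append.2 ⟨?_, (List.nodup_cons.1 (hD.nodup_of_isChain hys)).2, ?_⟩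
    · exact List.nodup_reverse.1 (hD.nodup_of_isChain (List.isChain_reverse.2 hxs))
    · exact fun a ha b hb hab => hdisj a ha (hab ▸ hb)
  refine ⟨x :: xs ++ ys, isTrekList_append_of_isChain hD hxs (by rwa [hxu]) hnd, rfl, ?_⟩
  rw [List.getLast?_append]
  cases ys with
  | nil => simp [List.getLast?_eq_some_getLast, hxu, ← hyy]
  | cons c ys => simp [List.getLast?_eq_some_getLast, ← hyy]

theorem hasTrek_iff_exists_common_ancestor [Finite V] (hD : IsDAG D) {x y : V} :
    HasTrek D x y ↔ ∃ u, ReflTransGen D.Adj u x ∧ ReflTransGen D.Adj u y :=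
  ⟨HasTrek.exists_common_ancestor, hasTrek_of_exists_common_ancestor hD⟩

end Trek

section Source

variable {D : Digraph V} {s u : V}

theorem mem_anSet {A : Set V} :
    s ∈ anSet D A ↔ ∃ a ∈ A, ReflTransGen D.Adj s a := by
  simp [anSet, an]

theorem IsSource.eq_of_reflTransGen (hs : IsSource D s) (h : ReflTransGen D.Adj u s) : u = s := by
  rcases h.cases_tail with rfl | ⟨p, -, hps⟩
  · rfl
  · exact absurd (show p ∈ pa D s from hps) (hs ▸ Set.notMem_empty p)

theorem an_eq_singleton_iff (hD : IsDAG D) : an D u = {u} ↔ IsSource D u := by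
  refine ⟨fun h => Set.eq_empty_iff_forall_notMem.2 fun p hp => ?_, fun hu => ?_⟩
  · have hpu : p ∈ an D u := ReflTransGen.single hp
    obtain rfl : p = u := by rwa [h] at hpu
    exact hD p (.single hp)
  · ext x
    exact ⟨hu.eq_of_reflTransGen, fun hx => hx ▸ .refl⟩

theorem mem_anSet_pa {v : V} : s ∈ anSet D (pa D v) ↔ TransGen D.Adj s v := by
  rw [mem_anSet, TransGen.tail'_iff]
  exact exists_congr fun _ => and_comm

theorem mem_maSet_pa (hD : IsDAG D) {v : V} :
    s ∈ maSet D (pa D v) ↔ IsSource D s ∧ TransGen D.Adj s v := by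
  rw [maSet, Set.mem_ofPred_eq, mem_anSet_pa, an_eq_singleton_iff hD, and_comm]

theorem exists_isSource_reflTransGen [Finite V] (hD : IsDAG D) (x : V) :
    ∃ s, IsSource D s ∧ ReflTransGen D.Adj s x := by
  obtain ⟨s, hsx, hmin⟩ := hD.exists_minimal (S := {s | ReflTransGen D.Adj s x}) ⟨x, .refl⟩
  refine ⟨s, Set.eq_empty_iff_forall_notMem.2 fun p hp => ?_, hsx⟩
  exact hmin p (.head hp hsx) (.single hp)

theorem hasTrek_iff_of_isSource [Finite V] (hD : IsDAG D) (hs : IsSource D s) {x : V} :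
    HasTrek D s x ↔ ReflTransGen D.Adj s x := by
  rw [hasTrek_iff_exists_common_ancestor hD]
  exact ⟨fun ⟨u, hus, hux⟩ => hs.eq_of_reflTransGen hus ▸ hux, fun h => ⟨s, .refl, h⟩⟩

end Source

section AddEdge

variable {E : Digraph V} {a b : V}

theorem addEdge_delEdge {D : Digraph V} (h : D.Adj a b) : addEdge (delEdge D a b) a b = D := by
  ext x y
  by_cases hxy : x = a ∧ y = b
  · obtain ⟨rfl, rfl⟩ := hxy
    simpa [addEdge] using h
  · simp only [addEdge, delEdge, hxy, or_false, not_false_eq_true, and_true]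

theorem reflTransGen_le_addEdge : ReflTransGen E.Adj ≤ ReflTransGen (addEdge E a b).Adj :=
  ReflTransGen.mono fun _ _ => .inl

theorem reflTransGen_addEdge_iff {x y : V} :
    ReflTransGen (addEdge E a b).Adj x y ↔
      ReflTransGen E.Adj x y ∨ (ReflTransGen E.Adj x a ∧ ReflTransGen E.Adj b y) := by
  constructor
  · intro h
    induction h with
    | refl => exact .inl .refl
    | tail _ hyz ih =>
      rcases hyz with hyz | ⟨rfl, rfl⟩
      · exact ih.imp (·.tail hyz) fun ⟨hxa, hby⟩ => ⟨hxa, hby.tail hyz⟩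
      · exact .inr ⟨ih.elim id (·.1), .refl⟩
  · rintro (h | ⟨hxa, hby⟩)
    · exact reflTransGen_le_addEdge _ _ h
    · exact ((reflTransGen_le_addEdge _ _ hxa).tail (.inr ⟨rfl, rfl⟩)).trans
        (reflTransGen_le_addEdge _ _ hby)

theorem reflTransGen_addEdge_left_iff {x : V} :
    ReflTransGen (addEdge E a b).Adj x a ↔ ReflTransGen E.Adj x a := by
  rw [reflTransGen_addEdge_iff]
  exact ⟨fun h => h.elim id (·.1), .inl⟩

theorem isDAG_addEdge_iff : IsDAG (addEdge E a b) ↔ IsDAG E ∧ ¬ReflTransGen E.Adj b a := by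
  constructor
  · intro h
    refine ⟨fun x hx => h x (TransGen.mono (fun _ _ => .inl) _ _ hx), fun hba => h a ?_⟩
    exact .head' (.inr ⟨rfl, rfl⟩) (reflTransGen_addEdge_iff.2 (.inl hba))
  · rintro ⟨hE, hba⟩ x hx
    obtain ⟨y, hxy, hyx⟩ := TransGen.tail'_iff.1 hx
    rcases hyx with hyx | ⟨rfl, rfl⟩
    · rcases reflTransGen_addEdge_iff.1 hxy with hxy | ⟨hxa, hby⟩
      · exact hE x (.tail' hxy hyx)
      · exact hba ((hby.tail hyx).trans hxa)
    · exact hba (reflTransGen_addEdge_left_iff.1 hxy)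

theorem isSource_addEdge_iff {s : V} : IsSource (addEdge E a b) s ↔ IsSource E s ∧ s ≠ b := by
  simp only [IsSource, pa, addEdge, Set.eq_empty_iff_forall_notMem, Set.mem_ofPred_eq]
  constructor
  · intro h
    exact ⟨fun p hp => h p (.inl hp), fun hsb => h a (.inr ⟨rfl, hsb⟩)⟩
  · rintro ⟨h, hsb⟩ p (hp | ⟨-, rfl⟩)
    exacts [h p hp, hsb rfl]

theorem an_addEdge {u : V} (hu : ¬ReflTransGen E.Adj b u) : an (addEdge E a b) u = an E u := by
  ext x
  simp only [an, Set.mem_ofPred_eq, reflTransGen_addEdge_iff]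
  exact ⟨fun h => h.elim id fun h => (hu h.2).elim, .inl⟩

theorem anSet_addEdge {A : Set V} (hA : ∀ p ∈ A, ¬ReflTransGen E.Adj b p) :
    anSet (addEdge E a b) A = anSet E A :=
  Set.iUnion₂_congr fun p hp => an_addEdge (hA p hp)

theorem maSet_addEdge {A : Set V} (hA : ∀ p ∈ A, ¬ReflTransGen E.Adj b p) :
    maSet (addEdge E a b) A = maSet E A := by
  ext u
  simp only [maSet, anSet_addEdge hA]
  refine and_congr_right fun hu => ?_
  obtain ⟨p, hp, hup⟩ := mem_anSet.1 hu
  rw [an_addEdge fun hbu => hA p hp (hbu.trans hup)]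

end AddEdge

section Swap

variable [Finite V] {E : Digraph V} {v w : V}

-- `u` reaches `x` in `E`, but reaches `y` only through the added edge `v → w`.
theorem exists_common_ancestor_addEdge_swap_of_mixed (hE : IsDAG E)
    (h : maSet E (pa E v) ⊆ maSet E (pa E w)) {u x y : V} (hux : ReflTransGen E.Adj u x)
    (huv : ReflTransGen E.Adj u v) (hwy : ReflTransGen E.Adj w y) :
    ∃ u', ReflTransGen (addEdge E w v).Adj u' x ∧ ReflTransGen (addEdge E w v).Adj u' y := by
  have hlift : ReflTransGen E.Adj ≤ ReflTransGen (addEdge E w v).Adj := reflTransGen_le_addEdge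
  obtain ⟨s, hs, hsu⟩ := exists_isSource_reflTransGen hE u
  rcases reflTransGen_iff_eq_or_transGen.1 (hsu.trans huv) with rfl | hsv
  · exact ⟨w, .head (.inr ⟨rfl, rfl⟩) (hlift _ _ (hsu.trans hux)), hlift _ _ hwy⟩
  · have hsw := ((mem_maSet_pa hE).1 (h ((mem_maSet_pa hE).2 ⟨hs, hsv⟩))).2
    exact ⟨s, hlift _ _ (hsu.trans hux), hlift _ _ (hsw.to_reflTransGen.trans hwy)⟩

theorem exists_common_ancestor_addEdge_swap (hE : IsDAG E)
    (h : maSet E (pa E v) ⊆ maSet E (pa E w)) {x y : V}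
    (hxy : ∃ u, ReflTransGen (addEdge E v w).Adj u x ∧ ReflTransGen (addEdge E v w).Adj u y) :
    ∃ u, ReflTransGen (addEdge E w v).Adj u x ∧ ReflTransGen (addEdge E w v).Adj u y := by
  have hlift : ReflTransGen E.Adj ≤ ReflTransGen (addEdge E w v).Adj := reflTransGen_le_addEdge
  obtain ⟨u, hux, huy⟩ := hxy
  rcases reflTransGen_addEdge_iff.1 hux with hux | ⟨huv, hwx⟩ <;>
    rcases reflTransGen_addEdge_iff.1 huy with huy | ⟨huv', hwy⟩
  · exact ⟨u, hlift _ _ hux, hlift _ _ huy⟩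
  · exact exists_common_ancestor_addEdge_swap_of_mixed hE h hux huv' hwy
  · obtain ⟨u', hy, hx⟩ := exists_common_ancestor_addEdge_swap_of_mixed hE h huy huv hwx
    exact ⟨u', hx, hy⟩
  · exact ⟨w, hlift _ _ hwx, hlift _ _ hwy⟩

theorem maSet_pa_subset_of_uncondEquiv (h₁ : IsDAG (addEdge E v w)) (h₂ : IsDAG (addEdge E w v))
    (heq : UncondEquiv (addEdge E v w) (addEdge E w v)) :
    maSet E (pa E v) ⊆ maSet E (pa E w) := by
  obtain ⟨hE, hwv⟩ := isDAG_addEdge_iff.1 h₁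
  intro s hs
  obtain ⟨hsrc, hsv⟩ := (mem_maSet_pa hE).1 hs
  have hsw : s ≠ w := by rintro rfl; exact hwv hsv.to_reflTransGen
  have hsv' : s ≠ v := by rintro rfl; exact hE s hsv
  have htrek : HasTrek (addEdge E v w) s w :=
    (hasTrek_iff_of_isSource h₁ (isSource_addEdge_iff.2 ⟨hsrc, hsw⟩)).2 <|
      (reflTransGen_addEdge_left_iff.2 hsv.to_reflTransGen).tail (.inr ⟨rfl, rfl⟩)
  have hsw' := (hasTrek_iff_of_isSource h₂ (isSource_addEdge_iff.2 ⟨hsrc, hsv'⟩)).1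
    ((heq s w hsw).1 htrek)
  refine (mem_maSet_pa hE).2 ⟨hsrc, ?_⟩
  exact (reflTransGen_iff_eq_or_transGen.1 (reflTransGen_addEdge_left_iff.1 hsw')).resolve_left
    hsw.symm

theorem uncondEquiv_addEdge_swap_iff (h₁ : IsDAG (addEdge E v w)) (h₂ : IsDAG (addEdge E w v)) :
    UncondEquiv (addEdge E v w) (addEdge E w v) ↔ maSet E (pa E v) = maSet E (pa E w) := by
  have hE := (isDAG_addEdge_iff.1 h₁).1
  constructor
  · intro heq
    exact (maSet_pa_subset_of_uncondEquiv h₁ h₂ heq).antisymm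
      (maSet_pa_subset_of_uncondEquiv h₂ h₁ fun x y hxy => (heq x y hxy).symm)
  · intro hma x y _
    rw [hasTrek_iff_exists_common_ancestor h₁, hasTrek_iff_exists_common_ancestor h₂]
    exact ⟨exists_common_ancestor_addEdge_swap hE hma.subset,
      exists_common_ancestor_addEdge_swap hE hma.symm.subset⟩

end Swap

theorem weaklyCovered_addEdge_iff {E : Digraph V} {v w : V} (hD : IsDAG (addEdge E v w))
    (hvw : ¬E.Adj v w) :
    WeaklyCovered (addEdge E v w) v w ↔
      maSet E (pa E v) = maSet E (pa E w) ∧ ¬ReflTransGen E.Adj v w := by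
  obtain ⟨hE, hwv⟩ := isDAG_addEdge_iff.1 hD
  have hne : v ≠ w := by rintro rfl; exact hwv .refl
  have hpa_v : pa (addEdge E v w) v = pa E v := by ext p; simp [pa, addEdge, hne]
  have hpa_w : pa (addEdge E v w) w \ {v} = pa E w := by
    ext p
    simp only [pa, addEdge, Set.mem_sdiff, Set.mem_ofPred_eq, Set.mem_singleton_iff, and_true]
    constructor
    · rintro ⟨hp | rfl, hpv⟩
      exacts [hp, absurd rfl hpv]
    · intro hp
      exact ⟨.inl hp, by rintro rfl; exact hvw hp⟩
  have hfree : ∀ c, ¬TransGen E.Adj w c → ∀ p ∈ pa E c, ¬ReflTransGen E.Adj w p :=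
    fun c hc p hp hwp => hc (.tail' hwp hp)
  have hfree_v := hfree v fun h => hwv h.to_reflTransGen
  have hfree_w := hfree w (hE w)
  rw [WeaklyCovered, hpa_v, hpa_w, maSet_addEdge hfree_v, maSet_addEdge hfree_w,
    anSet_addEdge hfree_w, mem_anSet_pa, reflTransGen_iff_eq_or_transGen, or_iff_right hne.symm]

/-- Let `D` be a DAG containing the edge `v → w` and let `D'`
be `D` with this edge replaced by `w → v`.  Then `D'` is a DAG unconditionally
equivalent to `D` iff `v → w` is weakly covered in `D`. -/
theorem revEdge_uncondEquiv_iff [Fintype V] (D : Digraph V) (hD : IsDAG D)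
    (v w : V) (he : D.Adj v w) :
    (IsDAG (revEdge D v w) ∧ UncondEquiv D (revEdge D v w)) ↔
      WeaklyCovered D v w := by
  obtain ⟨E, hvw, rfl, hrev⟩ : ∃ E : Digraph V,
      ¬E.Adj v w ∧ D = addEdge E v w ∧ revEdge D v w = addEdge E w v :=
    ⟨delEdge D v w, fun h => h.2 ⟨rfl, rfl⟩, (addEdge_delEdge he).symm, rfl⟩
  obtain ⟨hE, -⟩ := isDAG_addEdge_iff.1 hD
  rw [hrev, weaklyCovered_addEdge_iff hD hvw]
  constructor
  · rintro ⟨hD', heq⟩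
    exact ⟨(uncondEquiv_addEdge_swap_iff hD hD').1 heq, (isDAG_addEdge_iff.1 hD').2⟩
  · rintro ⟨hma, hvw⟩
    have hD' := isDAG_addEdge_iff.2 ⟨hE, hvw⟩
    exact ⟨hD', (uncondEquiv_addEdge_swap_iff hD hD').2 hma⟩
end UEC
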